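/- Burnside's vanishing theorem: if G is a finite group and χ is an irreducible complex character of G with χ(1) > 1, then there exists g ∈ G with χ(g) = 0. -/

import Mathlib

/-!
Suppose `χ` vanishes nowhere and let `n = |G|`. Every `χ(g ^ m)` is `P_g(ζ ^ m)` for an integer
polynomial `P_g` and a primitive `n`-th root of unity `ζ` (count eigenvalues of `ρ g`). Inside the
`n`-th cyclotomic field the automorphism `ζ ↦ ζ ^ k` therefore sends `χ(g)` to `χ(g ^ k)`, and for
`k` prime to `n` the map `g ↦ g ^ k` permutes `G ∖ {1}`. Hence `∏_{g ≠ 1} χ(g)` is a Galois-fixed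
algebraic integer, i.e. a nonzero integer, and `∏_{g ≠ 1} |χ(g)|² ≥ 1`. By AM–GM,
`∑_{g ≠ 1} |χ(g)|² ≥ n - 1`; but orthogonality says this sum is `n - χ(1)²`, so `χ(1) ≤ 1`.
-/

open CategoryTheory Polynomial Module Finset

lemma Polynomial.map_aeval_int {A B F : Type*} [Ring A] [Ring B] [FunLike F A B]
    [RingHomClass F A B] (f : F) (x : A) (P : ℤ[X]) : f (aeval x P) = aeval (f x) P :=
  (aeval_algHom_apply (f : A →+* B).toIntAlgHom x P).symm

lemma pow_sub_one_eq_inv_of_pow_eq_one {M : Type*} [DivisionMonoid M] {n : ℕ} (hn : n ≠ 0)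
    {x : M} (hx : x ^ n = 1) : x ^ (n - 1) = x⁻¹ :=
  eq_inv_of_mul_eq_one_left ((pow_sub_one_mul hn x).trans hx)

lemma prod_erase_one_comp_pow_of_coprime {G M : Type*} [Group G] [Fintype G] [DecidableEq G]
    [CommMonoid M] (f : G → M) {k : ℕ} (hk : (Nat.card G).Coprime k) :
    ∏ g ∈ univ.erase 1, f (g ^ k) = ∏ g ∈ univ.erase 1, f g :=
  Finset.prod_equiv (powCoprime hk) (fun g => by
    simpa using ((powCoprime hk).injective.eq_iff' (one_pow k)).not.symm) (fun _ _ => rfl)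

lemma exists_intCast_eq_of_forall_algEquiv_apply_eq {K : Type*} [Field K] [Algebra ℚ K]
    [FiniteDimensional ℚ K] [IsGalois ℚ K] {x : K} (hx : IsIntegral ℤ x)
    (hfix : ∀ σ : K ≃ₐ[ℚ] K, σ x = x) : ∃ z : ℤ, x = z := by
  obtain ⟨q, rfl⟩ := (IsGalois.mem_range_algebraMap_iff_fixed x).mpr hfix
  obtain ⟨z, rfl⟩ := IsIntegrallyClosed.isIntegral_iff.mp
    ((isIntegral_algebraMap_iff (algebraMap ℚ K).injective).mp hx)
  exact ⟨z, by simp⟩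

lemma Finset.card_le_sum_of_one_le_prod {ι : Type*} (s : Finset ι) {f : ι → ℝ}
    (hpos : ∀ i ∈ s, 0 < f i) (hprod : 1 ≤ ∏ i ∈ s, f i) : (#s : ℝ) ≤ ∑ i ∈ s, f i := by
  have hlog : 0 ≤ ∑ i ∈ s, Real.log (f i) := by
    rw [← Real.log_prod fun i hi => (hpos i hi).ne']
    exact Real.log_nonneg hprod
  have hle : ∑ i ∈ s, Real.log (f i) ≤ ∑ i ∈ s, (f i - 1) :=
    sum_le_sum fun i hi => Real.log_le_sub_one_of_pos (hpos i hi)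
  rw [sum_sub_distrib, sum_const, nsmul_one] at hle
  linarith

namespace Module.End

variable {F W : Type*} [Field F] [AddCommGroup W] [Module F W] {f : End F W}

lemma pow_apply_of_mem_eigenspace {μ : F} {x : W} (hx : x ∈ f.eigenspace μ) (m : ℕ) :
    (f ^ m) x = μ ^ m • x := by
  by_cases hx0 : x = 0
  · simp [hx0]
  · exact HasEigenvector.pow_apply ⟨hx, hx0⟩ m

variable [IsAlgClosed F] [FiniteDimensional F W] {ζ : F} {n : ℕ} [NeZero n]

lemma isInternal_eigenspace_pow_of_pow_eq_one (hζ : IsPrimitiveRoot ζ n) (hf : f ^ n = 1) :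
    DirectSum.IsInternal fun i : Fin n => f.eigenspace (ζ ^ (i : ℕ)) := by
  have : NeZero (n : F) := hζ.neZero'
  have hss : f.IsSemisimple := by
    refine isSemisimple_of_squarefree_aeval_eq_zero
      (X_pow_sub_one_separable_iff.mpr (NeZero.ne _)).squarefree (p := X ^ n - 1) ?_
    simp [hf]
  refine (DirectSum.isInternal_submodule_iff_iSupIndep_and_iSup_eq_top _).mpr
    ⟨f.eigenspaces_iSupIndep.comp fun i j h => Fin.ext (hζ.pow_inj i.2 j.2 h), ?_⟩
  refine eq_top_iff.mpr (hss.iSup_eigenspace_eq_top.ge.trans (iSup_le fun μ => ?_))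
  by_cases hμ : f.eigenspace μ = ⊥
  · simp [hμ]
  obtain ⟨x, hx, hx0⟩ := Submodule.exists_mem_ne_zero_of_ne_bot hμ
  have hμn : μ ^ n = 1 := by
    have := pow_apply_of_mem_eigenspace hx n
    rw [hf, one_apply] at this
    exact smul_left_injective F hx0 (by simpa using this.symm)
  obtain ⟨i, hi, rfl⟩ := hζ.eq_pow_of_pow_eq_one hμn
  exact le_iSup (fun j : Fin n => f.eigenspace (ζ ^ (j : ℕ))) ⟨i, hi⟩

lemma trace_pow_eq_sum_finrank_eigenspace (hζ : IsPrimitiveRoot ζ n) (hf : f ^ n = 1) (m : ℕ) :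
    LinearMap.trace F W (f ^ m) =
      ∑ i : Fin n, (finrank F (f.eigenspace (ζ ^ (i : ℕ))) : F) * (ζ ^ m) ^ (i : ℕ) := by
  have hmaps (i : Fin n) :
      Set.MapsTo (f ^ m) (f.eigenspace (ζ ^ (i : ℕ))) (f.eigenspace (ζ ^ (i : ℕ))) := fun x hx => by
    rw [SetLike.mem_coe, pow_apply_of_mem_eigenspace hx]
    exact Submodule.smul_mem _ _ hx
  rw [LinearMap.trace_eq_sum_trace_restrict (isInternal_eigenspace_pow_of_pow_eq_one hζ hf) hmaps]
  refine Finset.sum_congr rfl fun i _ => ?_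
  have : (f ^ m).restrict (hmaps i) = (ζ ^ m) ^ (i : ℕ) • LinearMap.id := by
    ext x
    change (f ^ m) x = (ζ ^ m) ^ (i : ℕ) • (x : W)
    rw [pow_apply_of_mem_eigenspace x.2, pow_right_comm]
  rw [this, map_smul, LinearMap.trace_id, smul_eq_mul, mul_comm]

theorem exists_trace_pow_eq_aeval (hζ : IsPrimitiveRoot ζ n) (hf : f ^ n = 1) :
    ∃ P : ℤ[X], ∀ m : ℕ, LinearMap.trace F W (f ^ m) = aeval (ζ ^ m) P :=
  ⟨∑ i : Fin n, (finrank F (f.eigenspace (ζ ^ (i : ℕ))) : ℤ[X]) * X ^ (i : ℕ), fun m => by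
    simp [trace_pow_eq_sum_finrank_eigenspace hζ hf]⟩

end Module.End

namespace FDRep

variable {G : Type*} [Group G] [Fintype G]

lemma exists_char_pow_eq_aeval {k : Type*} [Field k] [IsAlgClosed k] (V : FDRep k G)
    {ζ : k} (hζ : IsPrimitiveRoot ζ (Fintype.card G)) (g : G) :
    ∃ P : ℤ[X], ∀ m : ℕ, V.character (g ^ m) = aeval (ζ ^ m) P := by
  have hg : V.ρ g ^ Fintype.card G = 1 := by rw [← map_pow, pow_card_eq_one, map_one]
  simpa only [character, map_pow] using Module.End.exists_trace_pow_eq_aeval hζ hg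

lemma char_inv (V : FDRep ℂ G) (g : G) :
    V.character g⁻¹ = starRingEnd ℂ (V.character g) := by
  have hn : Fintype.card G ≠ 0 := Fintype.card_ne_zero
  have hζ := Complex.isPrimitiveRoot_exp _ hn
  set ζ := Complex.exp (2 * Real.pi * Complex.I / Fintype.card G)
  have hζconj : ζ ^ (Fintype.card G - 1) = starRingEnd ℂ ζ := by
    rw [pow_sub_one_eq_inv_of_pow_eq_one hn hζ.pow_eq_one,
      Complex.inv_eq_conj (Complex.norm_eq_one_of_pow_eq_one hζ.pow_eq_one hn)]
  obtain ⟨P, hP⟩ := V.exists_char_pow_eq_aeval hζ g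
  calc V.character g⁻¹ = aeval (ζ ^ (Fintype.card G - 1)) P := by
        rw [← hP, pow_sub_one_eq_inv_of_pow_eq_one hn pow_card_eq_one]
    _ = starRingEnd ℂ (aeval ζ P) := by rw [hζconj, map_aeval_int]
    _ = starRingEnd ℂ (V.character g) := by rw [← pow_one ζ, ← hP, pow_one]

lemma sum_normSq_char (V : FDRep ℂ G) [Simple V] :
    ∑ g : G, Complex.normSq (V.character g) = Fintype.card G := by
  have h := char_orthonormal V V
  rw [if_pos ⟨Iso.refl V⟩, Nat.card_eq_fintype_card] at h
  have hcard : (Fintype.card G : ℂ) ≠ 0 := Nat.cast_ne_zero.mpr Fintype.card_ne_zero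
  simp only [char_inv, Complex.mul_conj] at h
  exact_mod_cast ((inv_mul_eq_one₀ hcard).mp h).symm

theorem exists_prod_char_eq_intCast [DecidableEq G] (V : FDRep ℂ G) :
    ∃ z : ℤ, ∏ g ∈ univ.erase 1, V.character g = z := by
  set n := Fintype.card G
  have : NeZero n := ⟨Fintype.card_ne_zero⟩
  let K := CyclotomicField n ℚ
  have : IsCyclotomicExtension {n} ℚ K := CyclotomicField.isCyclotomicExtension n ℚ
  have : IsGalois ℚ K := IsCyclotomicExtension.isGalois {n} ℚ K
  have : FiniteDimensional ℚ K := IsCyclotomicExtension.finiteDimensional {n} ℚ K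
  let φ : K →ₐ[ℚ] ℂ := IsAlgClosed.lift
  set ζ := IsCyclotomicExtension.zeta n ℚ K
  have hζ : IsPrimitiveRoot ζ n := IsCyclotomicExtension.zeta_spec n ℚ K
  have hφζ : IsPrimitiveRoot (φ ζ) n := hζ.map_of_injective φ.injective
  choose P hP using V.exists_char_pow_eq_aeval hφζ
  let prodAt (k : ℕ) : K := ∏ g ∈ univ.erase 1, aeval (ζ ^ k) (P g)
  have hφ (k : ℕ) : φ (prodAt k) = ∏ g ∈ univ.erase 1, V.character (g ^ k) := by
    rw [map_prod]
    refine prod_congr rfl fun g _ => ?_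
    rw [hP, ← map_pow]
    exact map_aeval_int φ _ _
  have hfix (σ : K ≃ₐ[ℚ] K) : σ (prodAt 1) = prodAt 1 := by
    obtain ⟨k, -, hk, hσ⟩ := hζ.isPrimitiveRoot_iff.mp (hζ.map_of_injective σ.injective)
    have : σ (prodAt 1) = prodAt k := by
      rw [map_prod]
      refine prod_congr rfl fun g _ => ?_
      rw [pow_one, hσ]
      exact map_aeval_int σ _ _
    have hk' : (Nat.card G).Coprime k := by rwa [Nat.card_eq_fintype_card, Nat.coprime_comm]
    refine φ.injective (?_ : φ _ = φ _)
    rw [this, hφ, hφ, prod_erase_one_comp_pow_of_coprime _ hk']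
    simp only [pow_one]
  have hint : IsIntegral ℤ (prodAt 1) := IsIntegral.prod _ fun g _ =>
    .of_mem_of_fg _ (hζ.isIntegral (NeZero.pos n)).fg_adjoin_singleton _
      (by rw [pow_one]; exact aeval_mem_adjoin_singleton ℤ ζ)
  obtain ⟨z, hz⟩ := exists_intCast_eq_of_forall_algEquiv_apply_eq hint hfix
  refine ⟨z, ?_⟩
  have h := hφ 1
  rw [hz, map_intCast] at h
  simpa using h.symm

end FDRep

/-- **Burnside's vanishing theorem**: a non-linear irreducible complex character of a
finite group vanishes on some element. -/
theorem burnside_vanishing (G : Type) [Group G] [Fintype G]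
    (V : FDRep ℂ G) [Simple V] (hdeg : 1 < Module.finrank ℂ V) :
    ∃ g : G, V.character g = 0 := by
  classical
  by_contra! hne
  obtain ⟨z, hz⟩ := V.exists_prod_char_eq_intCast
  have hz0 : z ≠ 0 := by
    rintro rfl
    exact prod_ne_zero_iff.mpr (fun g _ => hne g) (by exact_mod_cast hz)
  have hprod : 1 ≤ ∏ g ∈ univ.erase 1, Complex.normSq (V.character g) := by
    rw [← map_prod, hz, Complex.normSq_intCast]
    exact_mod_cast Int.lt_iff_add_one_le.mp (mul_self_pos.mpr hz0)
  have hsum := card_le_sum_of_one_le_prod _ (fun g _ => Complex.normSq_pos.mpr (hne g)) hprod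
  have htotal := V.sum_normSq_char
  rw [← add_sum_erase _ _ (mem_univ 1), FDRep.char_one, Complex.normSq_natCast] at htotal
  rw [card_erase_of_mem (mem_univ 1), card_univ, Nat.cast_pred Fintype.card_pos] at hsum
  have hdeg' : (2 : ℝ) ≤ Module.finrank ℂ V := by exact_mod_cast hdeg
  have hdim : (Module.finrank ℂ V : ℝ) * Module.finrank ℂ V ≤ 1 := by linarith
  nlinarith
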